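/- Deleting a δ-edge from a fuzzy graph does not change the strong domination index: if ab is a δ-edge of X then SDI(X) = SDI(X \ ab). -/

import Mathlib

open Finset

/-- A fuzzy graph on vertex type `V`. -/
structure FuzzyGraph (V : Type*) where
  ρ : V → ℝ
  υ : V → V → ℝ
  ρ_nonneg : ∀ a, 0 ≤ ρ a
  ρ_le_one : ∀ a, ρ a ≤ 1
  υ_nonneg : ∀ a b, 0 ≤ υ a b
  symm : ∀ a b, υ a b = υ b a
  υ_le : ∀ a b, υ a b ≤ min (ρ a) (ρ b)
  loopless : ∀ a, υ a a = 0

namespace FuzzyGraph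

variable {V : Type*} [Fintype V] [DecidableEq V]

/-- Strength of a path given by its list of successive vertices:
the minimum of the weights of its edges. -/
def pathStrength (X : FuzzyGraph V) : List V → ℝ
  | [] => 0
  | [_] => 0
  | [a, b] => X.υ a b
  | a :: b :: c :: l => min (X.υ a b) (X.pathStrength (b :: c :: l))

/-- `l` is a path from `a` to `b` : distinct vertices joined by positive-weight edges. -/
def IsPath (X : FuzzyGraph V) (a b : V) (l : List V) : Prop :=
  l.Nodup ∧ l.head? = some a ∧ l.getLast? = some b ∧ 2 ≤ l.length ∧
    l.Chain' (fun x y => 0 < X.υ x y)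

/-- Strength of connectedness between two vertices: maximum strength of a path. -/
noncomputable def conn (X : FuzzyGraph V) (a b : V) : ℝ :=
  sSup {s | ∃ l : List V, X.IsPath a b l ∧ s = X.pathStrength l}

/-- Delete the edge `ab` (set its weight to `0`). -/
def deleteEdge (X : FuzzyGraph V) (a b : V) : FuzzyGraph V where
  ρ := X.ρ
  υ x y := if (x = a ∧ y = b) ∨ (x = b ∧ y = a) then 0 else X.υ x y
  ρ_nonneg := X.ρ_nonneg
  ρ_le_one := X.ρ_le_one
  υ_nonneg := by
    intro x y; split_ifs
    · exact le_rfl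
    · exact X.υ_nonneg x y
  symm := by
    intro x y
    by_cases h : (x = a ∧ y = b) ∨ (x = b ∧ y = a)
    · rw [if_pos h, if_pos (by tauto)]
    · rw [if_neg h, if_neg (by tauto), X.symm]
  υ_le := by
    intro x y; split_ifs
    · exact le_min (X.ρ_nonneg x) (X.ρ_nonneg y)
    · exact X.υ_le x y
  loopless := by
    intro x; split_ifs
    · rfl
    · exact X.loopless x

/-- `ab` is a strong edge (α- or β-strong). -/
def StrongEdge (X : FuzzyGraph V) (a b : V) : Prop :=
  0 < X.υ a b ∧ (X.deleteEdge a b).conn a b ≤ X.υ a b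

/-- `ab` is an α-strong edge. -/
def AlphaStrong (X : FuzzyGraph V) (a b : V) : Prop :=
  0 < X.υ a b ∧ (X.deleteEdge a b).conn a b < X.υ a b

/-- `ab` is a β-strong edge. -/
def BetaStrong (X : FuzzyGraph V) (a b : V) : Prop :=
  0 < X.υ a b ∧ X.υ a b = (X.deleteEdge a b).conn a b

/-- `ab` is a δ-edge. -/
def DeltaEdge (X : FuzzyGraph V) (a b : V) : Prop :=
  0 < X.υ a b ∧ X.υ a b < (X.deleteEdge a b).conn a b

/-- The minimum weight of a strong edge incident at `a`. -/
noncomputable def minInc (X : FuzzyGraph V) (a : V) : ℝ :=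
  sInf {w | ∃ b, X.StrongEdge a b ∧ w = X.υ a b}

/-- The weight of a set of vertices. -/
noncomputable def weight (X : FuzzyGraph V) (S : Finset V) : ℝ :=
  ∑ a ∈ S, X.minInc a

/-- `D` is a strong dominating set. -/
def IsSDS (X : FuzzyGraph V) (D : Finset V) : Prop :=
  ∀ v, v ∉ D → ∃ a ∈ D, X.StrongEdge a v

/-- `D` is a minimal strong dominating set. -/
def IsMinimalSDS (X : FuzzyGraph V) (D : Finset V) : Prop :=
  X.IsSDS D ∧ ∀ a ∈ D, ¬ X.IsSDS (D.erase a)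

/-- `D` is a minimum (least weight) strong dominating set. -/
def IsMinimumSDS (X : FuzzyGraph V) (D : Finset V) : Prop :=
  X.IsSDS D ∧ ∀ D' : Finset V, X.IsSDS D' → X.weight D ≤ X.weight D'

/-- The strong domination degree of a vertex. -/
noncomputable def sd (X : FuzzyGraph V) (u : V) : ℝ :=
  sInf {w | ∃ D : Finset V, X.IsMinimalSDS D ∧ u ∈ D ∧ w = X.weight D}

/-- The strong domination number. -/
noncomputable def gammaS (X : FuzzyGraph V) : ℝ :=
  sInf {w | ∃ D : Finset V, X.IsSDS D ∧ w = X.weight D}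

/-- The upper strong domination number. -/
noncomputable def GammaS (X : FuzzyGraph V) : ℝ :=
  sSup {w | ∃ D : Finset V, X.IsMinimalSDS D ∧ w = X.weight D}

/-- The strong domination index. -/
noncomputable def SDI (X : FuzzyGraph V) : ℝ := ∑ u : V, X.sd u

/-- `X` is connected. -/
def Connected (X : FuzzyGraph V) : Prop := ∀ a b : V, a ≠ b → ∃ l, X.IsPath a b l

/-- `X` is a strong fuzzy graph: every edge is strong. -/
def IsStrongFG (X : FuzzyGraph V) : Prop := ∀ a b, 0 < X.υ a b → X.StrongEdge a b

/-- Underlying (support) simple graph. -/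
def support (X : FuzzyGraph V) : SimpleGraph V where
  Adj a b := 0 < X.υ a b
  symm := ⟨by intro a b h; rw [X.symm]; exact h⟩
  loopless := ⟨by intro a h; rw [X.loopless] at h; exact lt_irrefl 0 h⟩

/-- `X` is a fuzzy tree. -/
def IsFuzzyTree (X : FuzzyGraph V) : Prop :=
  ∃ F : FuzzyGraph V, F.ρ = X.ρ ∧ (∀ a b, F.υ a b = X.υ a b ∨ F.υ a b = 0) ∧
    F.support.IsTree ∧ ∀ a b, 0 < X.υ a b → F.υ a b = 0 → X.υ a b < F.conn a b

/-- The size of a fuzzy graph: the sum of all edge weights. -/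
noncomputable def size (X : FuzzyGraph V) : ℝ := (∑ a : V, ∑ b : V, X.υ a b) / 2

/-- The underlying graph of `X` is a cycle. -/
def IsCycleGraph (X : FuzzyGraph V) : Prop :=
  ∃ n : ℕ, 3 ≤ n ∧ ∃ f : ZMod n ≃ V,
    ∀ x y : V, 0 < X.υ x y ↔ ∃ i : ZMod n, (x = f i ∧ y = f (i + 1)) ∨ (x = f (i + 1) ∧ y = f i)

/-- `X` is a fuzzy cycle: a cycle with at least two edges of minimum weight. -/
def IsFuzzyCycle (X : FuzzyGraph V) : Prop :=
  X.IsCycleGraph ∧ ∃ a b c d : V, 0 < X.υ a b ∧ 0 < X.υ c d ∧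
    Sym2.mk (a, b) ≠ Sym2.mk (c, d) ∧ X.υ a b = X.υ c d ∧
    ∀ x y, 0 < X.υ x y → X.υ a b ≤ X.υ x y

/-- A set of pairwise fuzzy independent vertices. -/
def IsFuzzyIndep (X : FuzzyGraph V) (S : Finset V) : Prop :=
  ∀ a ∈ S, ∀ b ∈ S, a ≠ b → ¬ X.StrongEdge a b

/-- The strong independent domination number. -/
noncomputable def iS (X : FuzzyGraph V) : ℝ :=
  sInf {w | ∃ D : Finset V, X.IsSDS D ∧ X.IsFuzzyIndep D ∧ w = X.weight D}

/-- The strong independence number. -/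
noncomputable def betaS (X : FuzzyGraph V) : ℝ :=
  sSup {w | ∃ S : Finset V, X.IsFuzzyIndep S ∧ w = X.weight S}

/-- Closed strong neighborhood. -/
def closedNbhd (X : FuzzyGraph V) (a : V) : Set V := insert a {b | X.StrongEdge a b}

/-- Open strong neighborhood. -/
def openNbhd (X : FuzzyGraph V) (a : V) : Set V := {b | X.StrongEdge a b}

/-- Private neighborhood of `a` with respect to `S`. -/
def privNbhd (X : FuzzyGraph V) (a : V) (S : Finset V) : Set V :=
  X.closedNbhd a \ ⋃ b ∈ S.erase a, X.closedNbhd b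

/-- `S` is a fuzzy irredundant set. -/
def IsIrredundant (X : FuzzyGraph V) (S : Finset V) : Prop :=
  ∀ a ∈ S, (X.privNbhd a S).Nonempty

/-- `S` is a maximal fuzzy irredundant set. -/
def IsMaximalIrredundant (X : FuzzyGraph V) (S : Finset V) : Prop :=
  X.IsIrredundant S ∧ ∀ v ∉ S, ¬ X.IsIrredundant (insert v S)

/-- The strong irredundance number. -/
noncomputable def irS (X : FuzzyGraph V) : ℝ :=
  sInf {w | ∃ S : Finset V, X.IsMaximalIrredundant S ∧ w = X.weight S}

end FuzzyGraph

/-!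
The strength of connectedness of `a` and `b` exceeds `t ≥ 0` exactly when `a` and `b` are joined
in the graph of edges heavier than `t`. Hence `xy` is strong iff `x` and `y` are not joined by
edges heavier than `xy`, and a δ-edge `ab` is one whose ends are so joined. Such a bypass of `ab`
survives in every threshold graph in which `ab` occurs, so deleting `ab` changes reachability in
none of them. Therefore `X` and `X \ ab` have the same strong edges, with the same weights, and
the strong domination index only depends on those.
-/

namespace SimpleGraph

variable {V : Type*} {G H : SimpleGraph V}

theorem reachable_of_isChain_adj {a b : V} {l : List V} (hl : l.IsChain G.Adj)
    (ha : l.head? = some a) (hb : l.getLast? = some b) : G.Reachable a b := by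
  obtain ⟨t, rfl⟩ : ∃ t, l = a :: t := List.head?_eq_some_iff.mp ha
  rw [reachable_iff_reflTransGen]
  exact List.relationReflTransGen_of_exists_isChain_cons t hl
    (Option.some_injective _ (List.getLast?_eq_some_getLast _ ▸ hb))

theorem reachable_le_of_adj_le_reachable (h : G.Adj ≤ H.Reachable) :
    G.Reachable ≤ H.Reachable := by
  simp only [reachable_eq_reflTransGen] at h ⊢
  exact Relation.reflTransGen_closed h

end SimpleGraph

namespace FuzzyGraph

section Connectedness

variable {V : Type*}

-- `u ≠ v` only matters for `t < 0`, where loops would otherwise qualify.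
def graphAbove (X : FuzzyGraph V) (t : ℝ) : SimpleGraph V where
  Adj u v := u ≠ v ∧ t < X.υ u v
  symm := ⟨fun u v h => ⟨h.1.symm, X.symm u v ▸ h.2⟩⟩
  loopless := ⟨fun _ h => h.1 rfl⟩

theorem graphAbove_anti (X : FuzzyGraph V) {t t' : ℝ} (h : t ≤ t') :
    X.graphAbove t' ≤ X.graphAbove t :=
  fun _ _ huv => ⟨huv.1, h.trans_lt huv.2⟩

theorem graphAbove_mono {X Y : FuzzyGraph V} (h : ∀ u v, Y.υ u v ≤ X.υ u v) (t : ℝ) :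
    Y.graphAbove t ≤ X.graphAbove t :=
  fun u v huv => ⟨huv.1, huv.2.trans_le (h u v)⟩

theorem ne_of_υ_pos (X : FuzzyGraph V) {a b : V} (h : 0 < X.υ a b) : a ≠ b := by
  rintro rfl
  exact h.ne' (X.loopless a)

theorem υ_le_one (X : FuzzyGraph V) (u v : V) : X.υ u v ≤ 1 :=
  (X.υ_le u v).trans ((min_le_left _ _).trans (X.ρ_le_one u))

theorem lt_pathStrength_iff (X : FuzzyGraph V) (t : ℝ) :
    ∀ {l : List V}, 2 ≤ l.length →
      (t < X.pathStrength l ↔ l.IsChain fun u v => t < X.υ u v)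
  | [u, v], _ => by simp [pathStrength]
  | u :: v :: w :: l, _ => by
    rw [pathStrength, lt_min_iff, X.lt_pathStrength_iff t (by simp)]
    exact (List.isChain_cons_cons (R := fun u v => t < X.υ u v)).symm

theorem pathStrength_le_one (X : FuzzyGraph V) : ∀ l : List V, X.pathStrength l ≤ 1
  | [] | [_] => zero_le_one
  | [u, v] => X.υ_le_one u v
  | u :: v :: _ :: _ => (min_le_left _ _).trans (X.υ_le_one u v)

theorem le_conn (X : FuzzyGraph V) {a b : V} {l : List V} (h : X.IsPath a b l) :
    X.pathStrength l ≤ X.conn a b :=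
  le_csSup ⟨1, by rintro _ ⟨l, -, rfl⟩; exact X.pathStrength_le_one l⟩ ⟨l, h, rfl⟩

theorem exists_isPath_of_lt_conn (X : FuzzyGraph V) {a b : V} {t : ℝ} (ht : 0 ≤ t)
    (h : t < X.conn a b) : ∃ l, X.IsPath a b l ∧ t < X.pathStrength l := by
  by_contra! hl
  exact h.not_ge (Real.sSup_le (by rintro _ ⟨l, hpath, rfl⟩; exact hl l hpath) ht)

theorem lt_conn_iff_reachable (X : FuzzyGraph V) {a b : V} (hab : a ≠ b) {t : ℝ} (ht : 0 ≤ t) :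
    t < X.conn a b ↔ (X.graphAbove t).Reachable a b := by
  constructor
  · intro h
    obtain ⟨l, ⟨-, ha, hb, hlen, -⟩, hl⟩ := X.exists_isPath_of_lt_conn ht h
    exact SimpleGraph.reachable_of_isChain_adj (((X.lt_pathStrength_iff t hlen).mp hl).imp
      fun u v huv => ⟨X.ne_of_υ_pos (ht.trans_lt huv), huv⟩) ha hb
  · intro h
    obtain ⟨p, hp⟩ := h.exists_isPath
    have hlen : 2 ≤ p.support.length := by
      have := SimpleGraph.Walk.not_nil_iff_lt_length.mp (p.not_nil_of_ne hab)
      rw [p.length_support]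
      omega
    have hchain : p.support.IsChain fun u v => t < X.υ u v :=
      p.isChain_adj_support.imp fun _ _ huv => huv.2
    refine ((X.lt_pathStrength_iff t hlen).mpr hchain).trans_le (X.le_conn ⟨hp.support_nodup,
      ?_, ?_, hlen, hchain.imp fun _ _ huv => ht.trans_lt huv⟩)
    · simp [List.head?_eq_some_head p.support_ne_nil]
    · simp [List.getLast?_eq_some_getLast p.support_ne_nil]

end Connectedness

section DeleteEdge

variable {V : Type*} [DecidableEq V] (X : FuzzyGraph V) {a b u v : V}

theorem deleteEdge_υ_of_ne (h : ¬((u = a ∧ v = b) ∨ (u = b ∧ v = a))) :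
    (X.deleteEdge a b).υ u v = X.υ u v :=
  if_neg h

theorem deleteEdge_υ_of_pos (h : 0 < (X.deleteEdge a b).υ u v) :
    (X.deleteEdge a b).υ u v = X.υ u v :=
  X.deleteEdge_υ_of_ne fun huv => h.ne' (if_pos huv)

theorem deleteEdge_υ_le (a b u v : V) : (X.deleteEdge a b).υ u v ≤ X.υ u v := by
  by_cases huv : (u = a ∧ v = b) ∨ (u = b ∧ v = a)
  · exact (if_pos huv).trans_le (X.υ_nonneg u v)
  · exact (X.deleteEdge_υ_of_ne huv).le

theorem graphAbove_deleteEdge_of_le {t : ℝ} (h : X.υ a b ≤ t) :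
    (X.deleteEdge a b).graphAbove t = X.graphAbove t := by
  refine le_antisymm (graphAbove_mono (X.deleteEdge_υ_le a b) t)
    fun u v ⟨huv, hlt⟩ => ⟨huv, ?_⟩
  rw [X.deleteEdge_υ_of_ne]
  · exact hlt
  rintro (⟨rfl, rfl⟩ | ⟨rfl, rfl⟩)
  · exact h.not_gt hlt
  · exact h.not_gt (X.symm u v ▸ hlt)

theorem lt_conn_deleteEdge_iff_reachable (h : 0 < X.υ a b) :
    X.υ a b < (X.deleteEdge a b).conn a b ↔ (X.graphAbove (X.υ a b)).Reachable a b := by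
  rw [lt_conn_iff_reachable _ (X.ne_of_υ_pos h) h.le, graphAbove_deleteEdge_of_le X le_rfl]

theorem strongEdge_iff :
    X.StrongEdge a b ↔ 0 < X.υ a b ∧ ¬(X.graphAbove (X.υ a b)).Reachable a b := by
  rw [StrongEdge]
  exact and_congr_right fun h => not_lt.symm.trans (X.lt_conn_deleteEdge_iff_reachable h).not

variable {X}

theorem DeltaEdge.reachable (h : X.DeltaEdge a b) : (X.graphAbove (X.υ a b)).Reachable a b :=
  (X.lt_conn_deleteEdge_iff_reachable h.1).mp h.2

theorem DeltaEdge.reachable_graphAbove_deleteEdge (h : X.DeltaEdge a b) (t : ℝ) :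
    ((X.deleteEdge a b).graphAbove t).Reachable = (X.graphAbove t).Reachable := by
  refine le_antisymm (SimpleGraph.Reachable.mono' (graphAbove_mono (X.deleteEdge_υ_le a b) t))
    (SimpleGraph.reachable_le_of_adj_le_reachable fun u v huv => ?_)
  by_cases hab : (u = a ∧ v = b) ∨ (u = b ∧ v = a)
  · have hbypass : ((X.deleteEdge a b).graphAbove t).Reachable a b := by
      refine h.reachable.mono ((X.graphAbove_deleteEdge_of_le le_rfl).symm.trans_le
        ((X.deleteEdge a b).graphAbove_anti ?_))
      rcases hab with ⟨rfl, rfl⟩ | ⟨rfl, rfl⟩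
      · exact huv.2.le
      · exact (X.symm u v ▸ huv.2).le
    rcases hab with ⟨rfl, rfl⟩ | ⟨rfl, rfl⟩
    · exact hbypass
    · exact hbypass.symm
  · exact SimpleGraph.Adj.reachable ⟨huv.1, X.deleteEdge_υ_of_ne hab ▸ huv.2⟩

theorem DeltaEdge.strongEdge_deleteEdge (h : X.DeltaEdge a b) :
    (X.deleteEdge a b).StrongEdge = X.StrongEdge := by
  funext u v
  by_cases hab : (u = a ∧ v = b) ∨ (u = b ∧ v = a)
  · refine propext (iff_of_false (fun huv => huv.1.ne' (if_pos hab)) ?_)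
    rw [strongEdge_iff, not_and_not_right]
    rcases hab with ⟨rfl, rfl⟩ | ⟨rfl, rfl⟩
    · exact fun _ => h.reachable
    · exact fun _ => X.symm u v ▸ h.reachable.symm
  · rw [strongEdge_iff, strongEdge_iff, X.deleteEdge_υ_of_ne hab,
      h.reachable_graphAbove_deleteEdge]

end DeleteEdge

theorem SDI_congr {V : Type*} [Fintype V] [DecidableEq V] {X Y : FuzzyGraph V}
    (hs : X.StrongEdge = Y.StrongEdge) (hυ : ∀ u v, X.StrongEdge u v → X.υ u v = Y.υ u v) :
    X.SDI = Y.SDI := by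
  have hmin : X.minInc = Y.minInc := by
    funext u
    refine congrArg sInf (Set.ext fun w => exists_congr fun v => ?_)
    rw [← hs]
    exact and_congr_right fun huv => by rw [hυ u v huv]
  have hminimal : X.IsMinimalSDS = Y.IsMinimalSDS := by
    funext D
    simp only [IsMinimalSDS, IsSDS, hs]
  simp only [SDI, sd, weight, hmin, hminimal]

end FuzzyGraph

/-- Deleting a δ-edge does not change the strong domination index. -/
theorem FuzzyGraph.SDI_deleteEdge_of_deltaEdge {V : Type*} [Fintype V] [DecidableEq V]
    (X : FuzzyGraph V) {a b : V} (h : X.DeltaEdge a b) :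
    X.SDI = (X.deleteEdge a b).SDI :=
  SDI_congr h.strongEdge_deleteEdge.symm fun _ _ huv =>
    (X.deleteEdge_υ_of_pos (h.strongEdge_deleteEdge ▸ huv).1).symm
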